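/- For every i ∈ ℤ one has X_i^{K'/k'} = ⊕_{l=0}^{n'−1} π'^l ⊗_{O_{k'}} 𝔪'^{i−l}, an internal direct sum of O_{k'}-submodules of K' ⊗_{k'} K'. -/

import Mathlib

set_option synthInstance.maxHeartbeats 1000000
set_option maxHeartbeats 1000000

open scoped TensorProduct

noncomputable section

/-- A normalized additive discrete valuation turning `K` into a complete discrete
valuation field (the value at `0` is junk). -/
structure CDVF (K : Type) [Field K] where
  v : K → ℤ
  v_mul : ∀ {x y : K}, x ≠ 0 → y ≠ 0 → v (x * y) = v x + v y
  v_add : ∀ {x y : K}, x ≠ 0 → y ≠ 0 → x + y ≠ 0 → min (v x) (v y) ≤ v (x + y)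
  v_one : v 1 = 0
  exists_uniformizer : ∃ x : K, x ≠ 0 ∧ v x = 1
  complete : ∀ f : ℕ → K,
    (∀ N : ℤ, ∃ M : ℕ, ∀ i ≥ M, ∀ j ≥ M, f i = f j ∨ N ≤ v (f i - f j)) →
    ∃ x : K, ∀ N : ℤ, ∃ M : ℕ, ∀ i ≥ M, f i = x ∨ N ≤ v (f i - x)

namespace CDVF

variable {K : Type} [Field K] (S : CDVF K)

/-- The ring of integers of a complete discrete valuation field. -/
def O : Subring K where
  carrier := {x : K | x = 0 ∨ 0 ≤ S.v x}
  zero_mem' := Or.inl rfl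
  one_mem' := Or.inr S.v_one.ge
  mul_mem' := by
    rintro x y hx hy
    rcases eq_or_ne x 0 with rfl | hx0
    · exact Or.inl (zero_mul _)
    rcases eq_or_ne y 0 with rfl | hy0
    · exact Or.inl (mul_zero _)
    · refine Or.inr ?_
      rw [S.v_mul hx0 hy0]
      have h1 := hx.resolve_left hx0
      have h2 := hy.resolve_left hy0
      omega
  add_mem' := by
    rintro x y hx hy
    rcases eq_or_ne x 0 with rfl | hx0
    · simpa using hy
    rcases eq_or_ne y 0 with rfl | hy0
    · simpa using hx
    rcases eq_or_ne (x + y) 0 with h | h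
    · exact Or.inl h
    · refine Or.inr ?_
      have h3 := S.v_add hx0 hy0 h
      have h1 := hx.resolve_left hx0
      have h2 := hy.resolve_left hy0
      omega
  neg_mem' := by
    rintro x hx
    rcases eq_or_ne x 0 with rfl | hx0
    · simp
    · refine Or.inr ?_
      have hn : S.v (-x) = S.v x := by
        have h1 : (-1 : K) ≠ 0 := by simp
        have e : (-1 : K) * (-1) = 1 := by ring
        have h2 := S.v_mul (x := (-1 : K)) (y := (-1 : K)) h1 h1
        rw [e, S.v_one] at h2
        have h3 := S.v_mul (x := (-1 : K)) (y := x) h1 hx0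
        rw [neg_one_mul] at h3
        omega
      rw [hn]
      exact hx.resolve_left hx0

/-- The maximal ideal of the ring of integers. -/
def mIdeal : Ideal S.O where
  carrier := {x : S.O | (x : K) = 0 ∨ 1 ≤ S.v (x : K)}
  zero_mem' := Or.inl rfl
  add_mem' := by
    rintro x y hx hy
    rcases eq_or_ne ((x : K)) 0 with h1 | h1
    · have : ((x + y : S.O) : K) = (y : K) := by push_cast [h1]; ring
      rw [Set.mem_setOf_eq, this]; exact hy
    rcases eq_or_ne ((y : K)) 0 with h2 | h2
    · have : ((x + y : S.O) : K) = (x : K) := by push_cast [h2]; ring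
      rw [Set.mem_setOf_eq, this]; exact hx
    rcases eq_or_ne ((x : K) + (y : K)) 0 with h | h
    · exact Or.inl (by push_cast; exact h)
    · refine Or.inr ?_
      have h3 := S.v_add h1 h2 h
      have hx' := hx.resolve_left h1
      have hy' := hy.resolve_left h2
      have : ((x + y : S.O) : K) = (x : K) + (y : K) := by push_cast; ring
      rw [this]
      omega
  smul_mem' := by
    rintro c x hx
    rcases eq_or_ne ((c : K)) 0 with h1 | h1
    · exact Or.inl (by push_cast [smul_eq_mul, h1]; ring)
    rcases eq_or_ne ((x : K)) 0 with h2 | h2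
    · exact Or.inl (by push_cast [smul_eq_mul, h2]; ring)
    · refine Or.inr ?_
      have hc : (c : K) = 0 ∨ 0 ≤ S.v (c : K) := c.2
      have hc' := hc.resolve_left h1
      have hx' := hx.resolve_left h2
      have : ((c • x : S.O) : K) = (c : K) * (x : K) := by push_cast [smul_eq_mul]; ring
      rw [this, S.v_mul h1 h2]
      omega

/-- The residue field (as a quotient ring). -/
abbrev Residue : Type := S.O ⧸ S.mIdeal

instance instCommRingResidue : CommRing S.Residue := Ideal.Quotient.commRing S.mIdeal

open Classical in
/-- Reduction map `O_K → k̄`, extended by (junk) zero outside of `O_K`. -/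
def redK (x : K) : S.Residue :=
  if h : x ∈ S.O then Ideal.Quotient.mk S.mIdeal ⟨x, h⟩ else 0

/-- The ring `R = k̄[X]/(X^n - 1)`. -/
abbrev Rring (n : ℕ) : Type :=
  Polynomial S.Residue ⧸ Ideal.span {(Polynomial.X : Polynomial S.Residue) ^ n - 1}

instance instCommRingRring (n : ℕ) : CommRing (S.Rring n) := Ideal.Quotient.commRing _

/-- The class of the variable `X` in `R`. -/
def mkX (n : ℕ) : S.Rring n :=
  Ideal.Quotient.mk _ Polynomial.X

instance instAlgebraResidueRring (n : ℕ) : Algebra S.Residue (S.Rring n) :=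
  Ideal.Quotient.algebra _

instance instModuleResidueRring (n : ℕ) : Module S.Residue (S.Rring n) :=
  Algebra.toModule

end CDVF

/-- A totally ramified extension `K/k` of complete discrete valuation fields,
where `v` is the normalized valuation of `K`. -/
structure TotallyRamified (k K : Type) [Field k] [Field K] [Algebra k K]
    extends CDVF K where
  finiteDim : FiniteDimensional k K
  val_dvd : ∀ x : k, x ≠ 0 →
    (Module.finrank k K : ℤ) ∣ toCDVF.v (algebraMap k K x)
  exists_base_uniformizer : ∃ x : k, x ≠ 0 ∧
    toCDVF.v (algebraMap k K x) = (Module.finrank k K : ℤ)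
  residue_trivial : ∀ x : K, (x = 0 ∨ 0 ≤ toCDVF.v x) →
    ∃ y : k, x - algebraMap k K y = 0 ∨ 1 ≤ toCDVF.v (x - algebraMap k K y)

/-- A totally ramified extension together with its ramification depth `d`;
`d` is characterized by the property that the codifferent of `K/k`
(the trace-dual of `O_K`) equals `𝔪^(1-d-n)`, i.e. `d = v(different) - n + 1`. -/
structure TotallyRamifiedD (k K : Type) [Field k] [Field K] [Algebra k K]
    extends TotallyRamified k K where
  depth : ℤ
  depth_spec : ∀ x : K,
    (∀ y : K, (y = 0 ∨ 0 ≤ toCDVF.v y) →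
      (Algebra.trace k K (x * y) = 0 ∨
        0 ≤ toCDVF.v (algebraMap k K (Algebra.trace k K (x * y))))) ↔
    (x = 0 ∨ 1 - depth - (Module.finrank k K : ℤ) ≤ toCDVF.v x)

section GaloisModules

variable (k : Type) {K : Type} [Field k] [Field K] [Algebra k K]

/-- The action of the group algebra `K[G]` on `K`: `(Σ a_σ σ)(x) = Σ a_σ σ(x)`. -/
def applyGA (f : MonoidAlgebra K (K ≃ₐ[k] K)) (x : K) : K :=
  f.coeff.sum fun σ a => a * σ x

/-- The filtration module `C_i ⊆ K[G]`. -/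
def CfilGA (S : CDVF K) (i : ℤ) : Set (MonoidAlgebra K (K ≃ₐ[k] K)) :=
  {f | ∀ x : K, x ≠ 0 → applyGA k f x = 0 ∨ S.v x + i ≤ S.v (applyGA k f x)}

/-- `f ∈ K[G]` has all its coefficients in (the image of) `k₀`. -/
def coeffsIn (k₀ : Type) [CommRing k₀] [Algebra k₀ K]
    (f : MonoidAlgebra K (K ≃ₐ[k] K)) : Prop :=
  ∀ σ : K ≃ₐ[k] K, ∃ c : k₀, f.coeff σ = algebraMap k₀ K c

/-- The `k₀`-submodule `k₀[G] ⊆ K[G]`. -/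
def baseSub (k₀ : Type) [Field k₀] [Algebra k₀ K] :
    Submodule k₀ (MonoidAlgebra K (K ≃ₐ[k] K)) where
  carrier := {f | coeffsIn k k₀ f}
  zero_mem' := by intro σ; exact ⟨0, by simp⟩
  add_mem' := by
    intro f g hf hg σ
    obtain ⟨c, hc⟩ := hf σ
    obtain ⟨d, hd⟩ := hg σ
    refine ⟨c + d, ?_⟩
    rw [map_add, ← hc, ← hd]
    exact Finsupp.add_apply f.coeff g.coeff σ
  smul_mem' := by
    intro a f hf σ
    obtain ⟨c, hc⟩ := hf σ
    refine ⟨a * c, ?_⟩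
    rw [MonoidAlgebra.coeff_smul, Finsupp.smul_apply, hc, map_mul, Algebra.smul_def]

/-- `d(f)`: the unique integer `i` with `f ∈ C_{i+d} ∖ C_{i+d+1}` (junk value if
no such integer exists). -/
def dOfGA (S : TotallyRamifiedD k K) (f : MonoidAlgebra K (K ≃ₐ[k] K)) : ℤ :=
  Classical.epsilon fun i : ℤ =>
    f ∈ CfilGA k S.toCDVF (i + S.depth) ∧ f ∉ CfilGA k S.toCDVF (i + S.depth + 1)

/-- The map `p_i : C_i → R = k̄[X]/(X^n-1)`,
`p_i(f) = r(c_π)⁻¹ Σ_j r(f(π^{j-i})/π^j) X^j` (junk outside `C_i`). -/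
def pGA (S : TotallyRamifiedD k K) (π : K) (i : ℤ)
    (f : MonoidAlgebra K (K ≃ₐ[k] K)) :
    S.toCDVF.Rring (Module.finrank k K) :=
  Ring.inverse
      (algebraMap S.toCDVF.Residue _
        (S.toCDVF.redK (algebraMap k K (Algebra.trace k K (π ^ (-S.depth))))))
    * ∑ j ∈ Finset.range (Module.finrank k K),
        algebraMap S.toCDVF.Residue _
            (S.toCDVF.redK (applyGA k f (π ^ ((j : ℤ) - i)) / π ^ j))
          * (S.toCDVF.mkX (Module.finrank k K)) ^ j

/-- `ρ(f) = p_{d(f)+d}(f)`. -/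
def rhoGA (S : TotallyRamifiedD k K) (π : K) (f : MonoidAlgebra K (K ≃ₐ[k] K)) :
    S.toCDVF.Rring (Module.finrank k K) :=
  pGA k S π (dOfGA k S f + S.depth) f

/-- `B_s = {f ∈ B : d(f) ≡ s mod e₀}`. -/
def BpartGA (S : TotallyRamifiedD k K) (e₀ : ℤ)
    (B : Set (MonoidAlgebra K (K ≃ₐ[k] K))) (s : ℤ) :
    Set (MonoidAlgebra K (K ≃ₐ[k] K)) :=
  {f | f ∈ B ∧ Int.ModEq e₀ (dOfGA k S f) s}

/-- `B` is graded-independent (relative to the modulus `e₀`): for every `s`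
the set `ρ(B_s) ⊆ R` is linearly independent over the residue field. -/
def GradedIndepGA (S : TotallyRamifiedD k K) (π : K) (e₀ : ℤ)
    (B : Set (MonoidAlgebra K (K ≃ₐ[k] K))) : Prop :=
  ∀ s : ℤ, LinearIndependent S.toCDVF.Residue
    (fun g : (rhoGA k S π '' BpartGA k S e₀ B s) =>
      (g : S.toCDVF.Rring (Module.finrank k K)))

/-- The (lower) ramification jump of `σ ∈ G`: `h(σ) = v(σ(π) - π) - 1`. -/
def rjump (S : CDVF K) (π : K) (σ : K ≃ₐ[k] K) : ℤ :=
  S.v (σ π - π) - 1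

/-- The ramification depth of a subextension `L/k` of `K/k`, where `e` is the
ramification index of `K/L`: `D` is the depth of `L/k` iff the trace-dual of
`O_L` equals `𝔪_L^(1-D-[L:k])`. -/
def IsSubDepth (S : CDVF K) (L : IntermediateField k K) (e D : ℤ) : Prop :=
  ∀ x : ↥L,
    (∀ y : ↥L, ((y : K) = 0 ∨ 0 ≤ S.v (y : K)) →
      (Algebra.trace k ↥L (x * y) = 0 ∨
        0 ≤ S.v (algebraMap k K (Algebra.trace k ↥L (x * y))))) ↔
    ((x : K) = 0 ∨ e * (1 - D - (Module.finrank k ↥L : ℤ)) ≤ S.v (x : K))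

end GaloisModules

section Phi

variable (k K : Type) [Field k] [Field K] [Algebra k K]

/-- The isomorphism `φ : K ⊗_k K → K[G]`, `x ⊗ y ↦ x Σ_σ σ(y) σ`. -/
def phiGA [FiniteDimensional k K] :
    K ⊗[k] K →ₗ[k] MonoidAlgebra K (K ≃ₐ[k] K) :=
  TensorProduct.lift
    { toFun := fun x =>
        { toFun := fun y => ∑ σ : K ≃ₐ[k] K, MonoidAlgebra.single σ (x * σ y)
          map_add' := fun y z => by
            rw [← Finset.sum_add_distrib]
            refine Finset.sum_congr rfl fun σ _ => ?_
            rw [map_add, mul_add, MonoidAlgebra.single_add]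
          map_smul' := fun a y => by
            rw [RingHom.id_apply, Finset.smul_sum]
            refine Finset.sum_congr rfl fun σ _ => ?_
            rw [map_smul, MonoidAlgebra.smul_single]
            congr 1
            rw [Algebra.smul_def, Algebra.smul_def]
            ring }
      map_add' := fun x x' => LinearMap.ext fun y => by
        show (∑ σ : K ≃ₐ[k] K, MonoidAlgebra.single σ ((x + x') * σ y)) =
          (∑ σ : K ≃ₐ[k] K, MonoidAlgebra.single σ (x * σ y)) +
            ∑ σ : K ≃ₐ[k] K, MonoidAlgebra.single σ (x' * σ y)
        rw [← Finset.sum_add_distrib]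
        refine Finset.sum_congr rfl fun σ _ => ?_
        rw [add_mul, MonoidAlgebra.single_add]
      map_smul' := fun a x => LinearMap.ext fun y => by
        show (∑ σ : K ≃ₐ[k] K, MonoidAlgebra.single σ ((a • x) * σ y)) =
          a • ∑ σ : K ≃ₐ[k] K, MonoidAlgebra.single σ (x * σ y)
        rw [Finset.smul_sum]
        refine Finset.sum_congr rfl fun σ _ => ?_
        rw [MonoidAlgebra.smul_single]
        congr 1
        rw [Algebra.smul_def, Algebra.smul_def]
        ring }

/-- Coefficientwise (Hadamard) product on `K[G]`. -/
def hadamardGA (f g : MonoidAlgebra K (K ≃ₐ[k] K)) :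
    MonoidAlgebra K (K ≃ₐ[k] K) :=
  MonoidAlgebra.ofCoeff (Finsupp.zipWith (· * ·) (mul_zero 0) f.coeff g.coeff)

/-- The filtration `X_i = Σ_j 𝔪^j ⊗_{O_k} 𝔪^{i-j} ⊆ K ⊗_k K`. -/
def Xfil (S : CDVF K) (i : ℤ) : AddSubgroup (K ⊗[k] K) :=
  AddSubgroup.closure
    {z | ∃ (x y : K) (j : ℤ), (x = 0 ∨ j ≤ S.v x) ∧ (y = 0 ∨ i - j ≤ S.v y) ∧
      z = x ⊗ₜ[k] y}

/-- The subring `O_K ⊗_{O_k} O_K ⊆ K ⊗_k K` (more precisely, its image). -/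
def OOsub (S : CDVF K) : Subring (K ⊗[k] K) :=
  Subring.closure
    {z | ∃ x y : K, (x = 0 ∨ 0 ≤ S.v x) ∧ (y = 0 ∨ 0 ≤ S.v y) ∧ z = x ⊗ₜ[k] y}

/-- The partial (pre)order on `ℤ²` induced by the componentwise order on the
quotient `𝒳 = ℤ²/∼`, where `(a,b) ∼ (a-nc, b+nc)`. -/
def classLE (n : ℤ) (q q' : ℤ × ℤ) : Prop :=
  ∃ c : ℤ, q.1 ≤ q'.1 + n * c ∧ q.2 ≤ q'.2 - n * c

/-- `α ∈ K ⊗_k K` is diagonal: it can be written as `Σ ε_{ij} π^i ⊗ π^j` with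
`ε_{ij}` units of `O_K ⊗_{O_k} O_K`, the classes of the pairs `(i,j)` pairwise
incomparable, and `i + j` constant. -/
def DiagonalT (S : CDVF K) (π : K) (n : ℤ) (α : K ⊗[k] K) : Prop :=
  ∃ (T : Finset (ℤ × ℤ)) (ε : ℤ × ℤ → K ⊗[k] K) (c : ℤ),
    (∀ q ∈ T, ε q ∈ OOsub k K S ∧ ∃ β ∈ OOsub k K S, ε q * β = 1) ∧
    (∀ q ∈ T, ∀ q' ∈ T, q ≠ q' → ¬classLE n q q' ∧ ¬classLE n q' q) ∧
    (∀ q ∈ T, q.1 + q.2 = c) ∧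
    α = ∑ q ∈ T, (ε q) * ((π ^ q.1) ⊗ₜ[k] (π ^ q.2))

/-- The defining properties of the canonical map `r_X : X_0/X_1 → k̄[X]/(X^n-1)`
(viewed as a function on `X_0 ⊆ K ⊗_k K`): it is additive and multiplicative on
`X_0`, unital, kills `X_1`, sends `π ⊗ π⁻¹` to `X` and is `k̄`-linear. -/
def IsRX (S : CDVF K) (n : ℕ) (π : K) (ψ : K ⊗[k] K → S.Rring n) : Prop :=
  (∀ x y : K ⊗[k] K, x ∈ Xfil k K S 0 → y ∈ Xfil k K S 0 →
    ψ (x + y) = ψ x + ψ y) ∧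
  (∀ x y : K ⊗[k] K, x ∈ Xfil k K S 0 → y ∈ Xfil k K S 0 →
    ψ (x * y) = ψ x * ψ y) ∧
  ψ 1 = 1 ∧
  (∀ x ∈ Xfil k K S 1, ψ x = 0) ∧
  ψ (π ⊗ₜ[k] π⁻¹) = S.mkX n ∧
  (∀ c : k, (c = 0 ∨ 0 ≤ S.v (algebraMap k K c)) →
    ψ (algebraMap k K c ⊗ₜ[k] (1 : K)) =
      algebraMap S.Residue (S.Rring n) (S.redK (algebraMap k K c)))

end Phi

section TensorMapSec

variable (k' k K' K : Type) [Field k'] [Field k] [Field K'] [Field K]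
  [Algebra k' k] [Algebra k' K'] [Algebra k K] [Algebra K' K] [Algebra k' K]
  [IsScalarTower k' k K] [IsScalarTower k' K' K]

/-- The natural map `K' ⊗_{k'} K' → K ⊗_k K`, `x ⊗ y ↦ x ⊗ y`. -/
def tensorMap : K' ⊗[k'] K' →+ K ⊗[k] K :=
  TensorProduct.liftAddHom
    { toFun := fun x =>
        { toFun := fun y => algebraMap K' K x ⊗ₜ[k] algebraMap K' K y
          map_zero' := by simp
          map_add' := by intro y z; simp [map_add, TensorProduct.tmul_add] }
      map_zero' := by
        ext y; simp
      map_add' := by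
        intro x z; ext y; simp [map_add, TensorProduct.add_tmul] }
    (by
      intro r m n
      have h : ∀ u : K', algebraMap K' K (r • u) =
          (algebraMap k' k r) • (algebraMap K' K u) := by
        intro u
        rw [Algebra.smul_def, map_mul, Algebra.smul_def]
        congr 1
        rw [← IsScalarTower.algebraMap_apply k' K' K,
          IsScalarTower.algebraMap_apply k' k K]
      simp only [AddMonoidHom.coe_mk, ZeroHom.coe_mk]
      rw [h, h, TensorProduct.smul_tmul])

end TensorMapSec

section LiftGA

variable {k' K' k K : Type} [Field k'] [Field K'] [Field k] [Field K]
  [Algebra k' K'] [Algebra k K] [Algebra K' K]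

/-- Transport of a group-algebra element along a lifting `ι` of Galois
automorphisms and the inclusion of coefficients. -/
def liftGA (ι : (K' ≃ₐ[k'] K') → (K ≃ₐ[k] K))
    (f : MonoidAlgebra K' (K' ≃ₐ[k'] K')) : MonoidAlgebra K (K ≃ₐ[k] K) :=
  f.coeff.sum fun σ a => MonoidAlgebra.single (ι σ) (algebraMap K' K a)

end LiftGA

/-- The setting of an elementary abelian extension of degree `p²`:
`K = K₁K₂` with `K₁/k`, `K₂/k` of degree `p` with ramification jumps
`h₂ > h₁ > 0`; `σ₁` (resp. `σ₂`) is a nontrivial element of `G` acting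
trivially on `K₂` (resp. `K₁`), and `π` is a uniformizer of `K`. -/
structure ZpSetting (p : ℕ) (k K : Type) [Field k] [Field K] [Algebra k K]
    extends TotallyRamifiedD k K where
  π : K
  K₁ : IntermediateField k K
  K₂ : IntermediateField k K
  σ₁ : K ≃ₐ[k] K
  σ₂ : K ≃ₐ[k] K
  h₁ : ℤ
  h₂ : ℤ
  pp : p.Prime
  galois : IsGalois k K
  rank : Module.finrank k K = p ^ 2
  expP : ∀ σ : K ≃ₐ[k] K, σ ^ p = 1
  rank₁ : Module.finrank k ↥K₁ = p
  rank₂ : Module.finrank k ↥K₂ = p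
  normal₁ : Normal k ↥K₁
  normal₂ : Normal k ↥K₂
  compositum : K₁ ⊔ K₂ = ⊤
  σ₁_ne : σ₁ ≠ 1
  σ₂_ne : σ₂ ≠ 1
  σ₁_fix : ∀ x : K, x ∈ K₂ → σ₁ x = x
  σ₂_fix : ∀ x : K, x ∈ K₁ → σ₂ x = x
  h₁_pos : 0 < h₁
  h_lt : h₁ < h₂
  π_ne : π ≠ 0
  π_uni : toCDVF.v π = 1
  exists_uni₁ : ∃ x : K, x ∈ K₁ ∧ x ≠ 0 ∧ toCDVF.v x = (p : ℤ)
  exists_uni₂ : ∃ x : K, x ∈ K₂ ∧ x ≠ 0 ∧ toCDVF.v x = (p : ℤ)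
  jump₁ : ∀ x : K, x ∈ K₁ → x ≠ 0 → toCDVF.v x = (p : ℤ) →
    toCDVF.v (σ₁ x - x) = (p : ℤ) * (h₁ + 1)
  jump₂ : ∀ x : K, x ∈ K₂ → x ≠ 0 → toCDVF.v x = (p : ℤ) →
    toCDVF.v (σ₂ x - x) = (p : ℤ) * (h₂ + 1)

/-- The element `f_{ij} = (σ₁ - 1)^i (σ₂ - 1)^j ∈ k[G] ⊆ K[G]`. -/
def fijGA {p : ℕ} {k K : Type} [Field k] [Field K] [Algebra k K]
    (Z : ZpSetting p k K) (i j : ℕ) : MonoidAlgebra K (K ≃ₐ[k] K) :=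
  (MonoidAlgebra.single Z.σ₁ (1 : K) - 1) ^ i *
    (MonoidAlgebra.single Z.σ₂ (1 : K) - 1) ^ j

/-- The piecewise linear function `H(i,j)`. -/
def Hfun (p : ℕ) (h₁ h₂ d : ℤ) (i j : ℕ) : ℤ :=
  if (i : ℤ) + (j : ℤ) < (p : ℤ) - 1 then
    h₁ * i + ((p : ℤ) * h₂ - ((p : ℤ) - 1) * h₁) * j - d
  else ((p : ℤ) * i - ((p : ℤ) - 1) ^ 2) * h₁ + (p : ℤ) * h₂ * j

/-- The element `P(i,j) ∈ R = k̄[X]/(X^n - 1)`. -/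
def Pel {K : Type} [Field K] (S : CDVF K) (n p : ℕ) (h₁ h₂ : ℤ) (i j : ℕ) :
    S.Rring n :=
  if (i : ℤ) + (j : ℤ) < (p : ℤ) - 1 then
    ((S.mkX n) ^ h₁.toNat - 1) ^ (n - (i + j) - 1)
  else
    (∑ s ∈ Finset.range p,
        ((∏ l ∈ Finset.range i, ((s : ℤ) - ((l : ℤ) + 1) * h₁) : ℤ) : S.Rring n)
          * (S.mkX n) ^ (p * s)) *
    (∑ t ∈ Finset.range p,
        ((∏ l ∈ Finset.range j, ((t : ℤ) - ((l : ℤ) + 1) * h₂) : ℤ) : S.Rring n)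
          * (S.mkX n) ^ (p * t))

end

section Statement14Aux

variable {k' K' : Type} [Field k'] [Field K'] [Algebra k' K']

lemma CDVF.v_neg' (S : CDVF K') {x : K'} (hx : x ≠ 0) : S.v (-x) = S.v x := by
  have h1 : (-1 : K') ≠ 0 := by simp
  have e : (-1 : K') * (-1) = 1 := by ring
  have h2 := S.v_mul (x := (-1 : K')) (y := (-1 : K')) h1 h1
  rw [e, S.v_one] at h2
  have h3 := S.v_mul (x := (-1 : K')) (y := x) h1 hx
  rw [neg_one_mul] at h3
  omega

lemma CDVF.v_pow' (S : CDVF K') {x : K'} (hx : x ≠ 0) (m : ℕ) :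
    S.v (x ^ m) = (m : ℤ) * S.v x := by
  induction m with
  | zero => simpa using S.v_one
  | succ n ih =>
    rw [pow_succ, S.v_mul (pow_ne_zero n hx) hx, ih]
    push_cast; ring

lemma CDVF.v_add_lt (S : CDVF K') {a b : K'} (ha : a ≠ 0) (hb : b ≠ 0)
    (h : S.v a < S.v b) : a + b ≠ 0 ∧ S.v (a + b) = S.v a := by
  have hab : a + b ≠ 0 := by
    intro hE
    have hb' : b = -a := by linear_combination hE
    rw [hb', S.v_neg' ha] at h
    omega
  refine ⟨hab, le_antisymm ?_ ?_⟩
  · by_contra hgt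
    push_neg at hgt
    have hnb : (-b : K') ≠ 0 := neg_ne_zero.mpr hb
    have he : a + b + -b = a := by ring
    have hsum : a + b + -b ≠ 0 := by rw [he]; exact ha
    have h4 := S.v_add hab hnb hsum
    rw [he, S.v_neg' hb] at h4
    omega
  · have h4 := S.v_add ha hb hab
    omega

lemma CDVF.sum_distinct_val {ι : Type} (S : CDVF K') (f : ι → K') :
    ∀ F : Finset ι, (∀ i ∈ F, f i ≠ 0) →
      (∀ i ∈ F, ∀ j ∈ F, i ≠ j → S.v (f i) ≠ S.v (f j)) → F.Nonempty →
      (∑ i ∈ F, f i) ≠ 0 ∧ (∃ i ∈ F, S.v (∑ i ∈ F, f i) = S.v (f i)) ∧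
        ∀ j ∈ F, S.v (∑ i ∈ F, f i) ≤ S.v (f j) := by
  intro F
  induction F using Finset.cons_induction with
  | empty => intro _ _ h; exact absurd h (by simp)
  | cons a F ha ih =>
    intro hne hinj _
    rw [Finset.sum_cons]
    have hfa : f a ≠ 0 := hne a (Finset.mem_cons_self a F)
    rcases F.eq_empty_or_nonempty with rfl | hF
    · refine ⟨by simpa using hfa, ⟨a, Finset.mem_cons_self a _, by simp⟩, ?_⟩
      intro j hj
      rcases Finset.mem_cons.mp hj with rfl | hj'
      · simp
      · exact absurd hj' (by simp)
    · obtain ⟨hs0, ⟨i₀, hi₀, hvi₀⟩, hle⟩ :=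
        ih (fun i hi => hne i (Finset.mem_cons_of_mem hi))
          (fun i hi j hj h =>
            hinj i (Finset.mem_cons_of_mem hi) j (Finset.mem_cons_of_mem hj) h)
          hF
      have hvane : S.v (f a) ≠ S.v (∑ i ∈ F, f i) := by
        rw [hvi₀]
        exact hinj a (Finset.mem_cons_self a F) i₀ (Finset.mem_cons_of_mem hi₀)
          (fun h => ha (h ▸ hi₀))
      rcases lt_or_gt_of_ne hvane with hlt | hgt
      · obtain ⟨h0, hv⟩ := S.v_add_lt hfa hs0 hlt
        refine ⟨h0, ⟨a, Finset.mem_cons_self a F, hv⟩, ?_⟩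
        intro j hj
        rcases Finset.mem_cons.mp hj with rfl | hj'
        · rw [hv]
        · rw [hv]; exact le_trans hlt.le (hle j hj')
      · obtain ⟨h0, hv⟩ := S.v_add_lt hs0 hfa hgt
        rw [add_comm (f a) (∑ i ∈ F, f i)]
        refine ⟨h0, ⟨i₀, Finset.mem_cons_of_mem hi₀, by rw [hv, hvi₀]⟩, ?_⟩
        intro j hj
        rcases Finset.mem_cons.mp hj with rfl | hj'
        · rw [hv]; exact le_of_lt hgt
        · rw [hv]; exact hle j hj'

lemma CDVF.vge_add (S : CDVF K') {j : ℤ} {x y : K'} (hx : x = 0 ∨ j ≤ S.v x)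
    (hy : y = 0 ∨ j ≤ S.v y) : x + y = 0 ∨ j ≤ S.v (x + y) := by
  rcases eq_or_ne x 0 with rfl | hx0
  · simpa using hy
  rcases eq_or_ne y 0 with rfl | hy0
  · simpa using hx
  rcases eq_or_ne (x + y) 0 with h | h
  · exact Or.inl h
  · have h3 := S.v_add hx0 hy0 h
    have h1 := hx.resolve_left hx0
    have h2 := hy.resolve_left hy0
    exact Or.inr (by omega)

lemma CDVF.vge_neg (S : CDVF K') {j : ℤ} {x : K'} (hx : x = 0 ∨ j ≤ S.v x) :
    -x = 0 ∨ j ≤ S.v (-x) := by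
  rcases eq_or_ne x 0 with rfl | hx0
  · simp
  · exact Or.inr (by rw [S.v_neg' hx0]; exact hx.resolve_left hx0)

lemma st14_fv (S : TotallyRamified k' K') (π' : K') (hπ0 : π' ≠ 0)
    (hπ : S.toCDVF.v π' = 1) {c : k'} (hc : c ≠ 0) (m : ℕ) :
    algebraMap k' K' c * π' ^ m ≠ 0 ∧
    S.toCDVF.v (algebraMap k' K' c * π' ^ m) =
      S.toCDVF.v (algebraMap k' K' c) + m := by
  have h1 : algebraMap k' K' c ≠ 0 :=
    fun h0 => hc ((algebraMap k' K').injective (by rw [h0, map_zero]))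
  refine ⟨mul_ne_zero h1 (pow_ne_zero _ hπ0), ?_⟩
  rw [S.toCDVF.v_mul h1 (pow_ne_zero _ hπ0), S.toCDVF.v_pow' hπ0, hπ, mul_one]

lemma st14_vne (S : TotallyRamified k' K') (π' : K') (hπ0 : π' ≠ 0)
    (hπ : S.toCDVF.v π' = 1) {c c' : k'} (hc : c ≠ 0) (hc' : c' ≠ 0)
    {m m' : ℕ} (hm : m < Module.finrank k' K') (hm' : m' < Module.finrank k' K')
    (hne : m ≠ m') :
    S.toCDVF.v (algebraMap k' K' c * π' ^ m) ≠
      S.toCDVF.v (algebraMap k' K' c' * π' ^ m') := by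
  rw [(st14_fv S π' hπ0 hπ hc m).2, (st14_fv S π' hπ0 hπ hc' m').2]
  obtain ⟨a, ha⟩ := S.val_dvd c hc
  obtain ⟨a', ha'⟩ := S.val_dvd c' hc'
  rw [ha, ha']
  intro heq
  have hdvd : ((Module.finrank k' K' : ℤ)) ∣ ((m' : ℤ) - (m : ℤ)) :=
    ⟨a - a', by linear_combination -heq⟩
  have h0 := Int.eq_zero_of_dvd_of_natAbs_lt_natAbs hdvd (by omega)
  omega

lemma st14_li (S : TotallyRamified k' K') (π' : K') (hπ0 : π' ≠ 0)
    (hπ : S.toCDVF.v π' = 1) :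
    LinearIndependent k' (fun l : Fin (Module.finrank k' K') => π' ^ (l : ℕ)) := by
  classical
  rw [Fintype.linearIndependent_iff]
  intro g hg
  by_contra hgl
  push_neg at hgl
  obtain ⟨l, hl⟩ := hgl
  set f : Fin (Module.finrank k' K') → K' := fun m => algebraMap k' K' (g m) * π' ^ (m : ℕ) with hf
  set F : Finset (Fin (Module.finrank k' K')) :=
    Finset.univ.filter (fun m => g m ≠ 0) with hF
  have hsum : ∑ m ∈ F, f m = 0 := by
    rw [← hg, hF, Finset.sum_filter]
    refine Finset.sum_congr rfl fun m _ => ?_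
    by_cases h : g m = 0
    · simp [h, hf]
    · simp [h, hf, Algebra.smul_def]
  have hne : ∀ m ∈ F, f m ≠ 0 := by
    intro m hm
    have hm' : g m ≠ 0 := by simpa [hF] using hm
    exact (st14_fv S π' hπ0 hπ hm' (m : ℕ)).1
  have hinj : ∀ i ∈ F, ∀ j ∈ F, i ≠ j → S.toCDVF.v (f i) ≠ S.toCDVF.v (f j) := by
    intro a haF b hbF hab
    have ha' : g a ≠ 0 := by simpa [hF] using haF
    have hb' : g b ≠ 0 := by simpa [hF] using hbF
    exact st14_vne S π' hπ0 hπ ha' hb' a.isLt b.isLt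
      (fun h => hab (Fin.ext h))
  exact (S.toCDVF.sum_distinct_val f F hne hinj ⟨l, by simp [hF, hl]⟩).1 hsum

lemma st14_repr_bound (S : TotallyRamified k' K') (π' : K') (hπ0 : π' ≠ 0)
    (hπ : S.toCDVF.v π' = 1) (b : Module.Basis (Fin (Module.finrank k' K')) k' K')
    (hb : ∀ l, b l = π' ^ (l : ℕ)) {x : K'} (hx : x ≠ 0)
    (l : Fin (Module.finrank k' K')) :
    b.repr x l = 0 ∨
      S.toCDVF.v x ≤ S.toCDVF.v (algebraMap k' K' (b.repr x l)) + (l : ℕ) := by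
  classical
  set f : Fin (Module.finrank k' K') → K' :=
    fun m => algebraMap k' K' (b.repr x m) * π' ^ (m : ℕ) with hf
  set F : Finset (Fin (Module.finrank k' K')) :=
    Finset.univ.filter (fun m => b.repr x m ≠ 0) with hF
  have hxsum : x = ∑ m ∈ F, f m := by
    conv_lhs => rw [← b.sum_repr x]
    rw [hF, Finset.sum_filter]
    refine Finset.sum_congr rfl fun m _ => ?_
    by_cases h : b.repr x m = 0
    · simp [h, hf]
    · simp [h, hf, hb m, Algebra.smul_def]
  rcases eq_or_ne (b.repr x l) 0 with h | h
  · exact Or.inl h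
  refine Or.inr ?_
  have hne : ∀ m ∈ F, f m ≠ 0 := by
    intro m hm
    have hm' : b.repr x m ≠ 0 := by simpa [hF] using hm
    exact (st14_fv S π' hπ0 hπ hm' (m : ℕ)).1
  have hinj : ∀ i ∈ F, ∀ j ∈ F, i ≠ j → S.toCDVF.v (f i) ≠ S.toCDVF.v (f j) := by
    intro a haF c hcF hac
    have ha' : b.repr x a ≠ 0 := by simpa [hF] using haF
    have hc' : b.repr x c ≠ 0 := by simpa [hF] using hcF
    exact st14_vne S π' hπ0 hπ ha' hc' a.isLt c.isLt
      (fun hh => hac (Fin.ext hh))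
  have hlF : l ∈ F := by simp [hF, h]
  obtain ⟨hs0, -, hle⟩ := S.toCDVF.sum_distinct_val f F hne hinj ⟨l, hlF⟩
  have hfin := hle l hlF
  rw [← hxsum, (st14_fv S π' hπ0 hπ h (l : ℕ)).2] at hfin
  exact hfin

end Statement14Aux

/-- For a totally ramified extension `K'/k'` of degree `n'`
with uniformizer `π'`, one has `X_i = ⊕_{l=0}^{n'-1} π'^l ⊗ 𝔪'^{i-l}`
(an internal direct sum of `O_{k'}`-submodules of `K' ⊗_{k'} K'`). -/
theorem statement14 {k' K' : Type} [Field k'] [Field K'] [Algebra k' K']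
    (S : TotallyRamified k' K') (π' : K') (hπ0 : π' ≠ 0) (hπ : S.toCDVF.v π' = 1) :
    ∀ i : ℤ,
      (∀ z : K' ⊗[k'] K',
        z ∈ Xfil k' K' S.toCDVF i ↔
          ∃ y : ℕ → K',
            (∀ l < Module.finrank k' K', y l = 0 ∨ i - l ≤ S.toCDVF.v (y l)) ∧
            z = ∑ l ∈ Finset.range (Module.finrank k' K'), (π' ^ l) ⊗ₜ[k'] (y l)) ∧
      (∀ y y' : ℕ → K',
        (∀ l < Module.finrank k' K', y l = 0 ∨ i - l ≤ S.toCDVF.v (y l)) →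
        (∀ l < Module.finrank k' K', y' l = 0 ∨ i - l ≤ S.toCDVF.v (y' l)) →
        (∑ l ∈ Finset.range (Module.finrank k' K'), (π' ^ l) ⊗ₜ[k'] (y l)) =
          (∑ l ∈ Finset.range (Module.finrank k' K'), (π' ^ l) ⊗ₜ[k'] (y' l)) →
        ∀ l < Module.finrank k' K', y l = y' l) := by
  classical
  haveI := S.finiteDim
  set n := Module.finrank k' K' with hn
  have hnpos : 0 < n := Module.finrank_pos
  haveI : Nonempty (Fin n) := Fin.pos_iff_nonempty.mp hnpos
  obtain ⟨b, hb⟩ : ∃ b : Module.Basis (Fin n) k' K',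
      ∀ l, b l = π' ^ (l : ℕ) := by
    refine ⟨basisOfLinearIndependentOfCardEqFinrank (st14_li S π' hπ0 hπ)
      (by simp [hn]), fun l => ?_⟩
    rw [coe_basisOfLinearIndependentOfCardEqFinrank]
  have hvp : ∀ m : ℕ, S.toCDVF.v (π' ^ m) = (m : ℤ) := fun m => by
    rw [S.toCDVF.v_pow' hπ0, hπ, mul_one]
  intro i
  constructor
  · -- the iff characterizing membership in X_i
    intro z
    set P : AddSubgroup (K' ⊗[k'] K') :=
      { carrier := {w : K' ⊗[k'] K' | ∃ y : ℕ → K',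
          (∀ l < n, y l = 0 ∨ i - l ≤ S.toCDVF.v (y l)) ∧
          w = ∑ l ∈ Finset.range n, (π' ^ l) ⊗ₜ[k'] (y l)}
        zero_mem' := ⟨fun _ => 0, fun l _ => Or.inl rfl, by simp⟩
        add_mem' := by
          rintro u u' ⟨w, hw, rfl⟩ ⟨w', hw', rfl⟩
          refine ⟨fun l => w l + w' l,
            fun l hl => S.toCDVF.vge_add (hw l hl) (hw' l hl), ?_⟩
          rw [← Finset.sum_add_distrib]
          exact Finset.sum_congr rfl fun l _ => (TensorProduct.tmul_add _ _ _).symm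
        neg_mem' := by
          rintro u ⟨w, hw, rfl⟩
          refine ⟨fun l => -(w l), fun l hl => S.toCDVF.vge_neg (hw l hl), ?_⟩
          rw [← Finset.sum_neg_distrib]
          exact Finset.sum_congr rfl fun l _ => (TensorProduct.tmul_neg _ _).symm }
      with hP
    constructor
    · intro hz
      have hle : Xfil k' K' S.toCDVF i ≤ P := by
        refine (AddSubgroup.closure_le P).mpr ?_
        rintro u ⟨x, w, j, hx, hw, rfl⟩
        rcases eq_or_ne x 0 with rfl | hx0
        · exact ⟨fun _ => 0, fun l _ => Or.inl rfl, by simp⟩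
        rcases eq_or_ne w 0 with rfl | hw0
        · exact ⟨fun _ => 0, fun l _ => Or.inl rfl, by simp⟩
        have hxv : j ≤ S.toCDVF.v x := hx.resolve_left hx0
        have hwv : i - j ≤ S.toCDVF.v w := hw.resolve_left hw0
        refine ⟨fun l => if h : l < n then algebraMap k' K' (b.repr x ⟨l, h⟩) * w
          else 0, ?_, ?_⟩
        · intro l hl
          dsimp only
          rw [dif_pos hl]
          by_cases hc0 : b.repr x ⟨l, hl⟩ = 0
          · exact Or.inl (by rw [hc0, map_zero, zero_mul])
          · have hbd : S.toCDVF.v x ≤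
                S.toCDVF.v (algebraMap k' K' (b.repr x ⟨l, hl⟩)) + (l : ℤ) :=
              (st14_repr_bound S π' hπ0 hπ b hb hx0 ⟨l, hl⟩).resolve_left hc0
            have halg : algebraMap k' K' (b.repr x ⟨l, hl⟩) ≠ 0 :=
              fun h0 => hc0 ((algebraMap k' K').injective (by rw [h0, map_zero]))
            refine Or.inr ?_
            rw [S.toCDVF.v_mul halg hw0]
            omega
        · calc x ⊗ₜ[k'] w = (∑ m : Fin n, (b.repr x m) • b m) ⊗ₜ[k'] w := by
                rw [Module.Basis.sum_repr]
            _ = ∑ m : Fin n, ((b.repr x m) • b m) ⊗ₜ[k'] w := by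
                rw [TensorProduct.sum_tmul]
            _ = ∑ m : Fin n, (π' ^ (m : ℕ)) ⊗ₜ[k']
                  (algebraMap k' K' (b.repr x m) * w) := by
                refine Finset.sum_congr rfl fun m _ => ?_
                rw [hb m, TensorProduct.smul_tmul, Algebra.smul_def]
            _ = ∑ l ∈ Finset.range n, (π' ^ l) ⊗ₜ[k']
                  (if h : l < n then algebraMap k' K' (b.repr x ⟨l, h⟩) * w
                   else 0) := by
                rw [← Fin.sum_univ_eq_sum_range
                  (fun l => (π' ^ l) ⊗ₜ[k']
                    (if h : l < n then algebraMap k' K' (b.repr x ⟨l, h⟩) * w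
                     else 0)) n]
                refine Finset.sum_congr rfl fun m _ => ?_
                rw [dif_pos m.isLt]
      exact hle hz
    · rintro ⟨y, hy, rfl⟩
      refine AddSubgroup.sum_mem _ fun l hl => ?_
      exact AddSubgroup.subset_closure
        ⟨π' ^ l, y l, (l : ℤ), Or.inr (le_of_eq (hvp l).symm),
          hy l (Finset.mem_range.mp hl), rfl⟩
  · -- uniqueness
    intro y y' _ _ hsum l hl
    set φ : K' ⊗[k'] K' →ₗ[k'] K' :=
      TensorProduct.lift ((LinearMap.lsmul k' K').comp (b.coord ⟨l, hl⟩)) with hφdef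
    have hφ : ∀ a c : K', φ (a ⊗ₜ[k'] c) = (b.repr a ⟨l, hl⟩) • c := by
      intro a c
      rw [hφdef, TensorProduct.lift.tmul]
      rfl
    have key : ∀ w : ℕ → K',
        φ (∑ m ∈ Finset.range n, (π' ^ m) ⊗ₜ[k'] w m) = w l := by
      intro w
      rw [map_sum]
      have hterm : ∀ m ∈ Finset.range n,
          φ ((π' ^ m) ⊗ₜ[k'] w m) = if m = l then w m else 0 := by
        intro m hm
        have hm' : m < n := Finset.mem_range.mp hm
        rw [hφ]
        have hbm : (π' ^ m : K') = b ⟨m, hm'⟩ := (hb ⟨m, hm'⟩).symm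
        rw [hbm, b.repr_self, Finsupp.single_apply]
        by_cases h : m = l
        · subst h
          simp
        · have : (⟨m, hm'⟩ : Fin n) ≠ ⟨l, hl⟩ := by
            intro hh
            exact h (by simpa using congrArg Fin.val hh)
          rw [if_neg this, if_neg h, zero_smul]
      rw [Finset.sum_congr rfl hterm, Finset.sum_ite_eq' (Finset.range n) l w,
        if_pos (Finset.mem_range.mpr hl)]
    have h1 := key y
    have h2 := key y'
    rw [hsum] at h1
    rw [h1] at h2
    exact h2
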